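/- The one-parameter family g_t ∈ GL(3, ℂ) given by g_t(e₁) = t·e₁, g_t(e₂) = t²·e₂, g_t(e₃) = e₃ contracts μ₁ to μ₄: for all x, y, lim_{t→0} g_t^{-1}(μ₁(g_t(x), g_t(y))) = μ₄(x,y), where μ₄ has the only nonzero basis product μ₄(e₁,e₁) = e₂. -/

import Mathlib

open Filter

/-- `μ₁` on `ℂ³`: `μ₁(e₁,e₁) = e₂`, `μ₁(e₂,e₁) = e₃`, other basis products zero. -/
def mu1 (x y : Fin 3 → ℂ) : Fin 3 → ℂ :=
  (x 0 * y 0) • (Pi.single 1 1 : Fin 3 → ℂ) + (x 1 * y 0) • (Pi.single 2 1 : Fin 3 → ℂ)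

/-- `μ₄` on `ℂ³`: the only nonzero basis product is `μ₄(e₁,e₁) = e₂`. -/
def mu4 (x y : Fin 3 → ℂ) : Fin 3 → ℂ :=
  (x 0 * y 0) • (Pi.single 1 1 : Fin 3 → ℂ)

/-- The family `g_t`: `g_t(e₁) = t·e₁`, `g_t(e₂) = t²·e₂`, `g_t(e₃) = e₃`. -/
def gt' (t : ℂ) (v : Fin 3 → ℂ) : Fin 3 → ℂ :=
  ![t * v 0, t ^ 2 * v 1, v 2]

/-- The inverse of `g_t` (for `t ≠ 0`). -/
noncomputable def gtInv (t : ℂ) (w : Fin 3 → ℂ) : Fin 3 → ℂ :=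
  ![w 0 / t, w 1 / t ^ 2, w 2]

/-- `μ₁(e₁,e₁) = e₂` has weights `t·t = t²` on both sides, so it survives conjugation by `g_t`,
while `μ₁(e₂,e₁) = e₃` acquires the factor `t²·t = t³`, which vanishes in the limit. -/
theorem gtInv_mu1_gt' {t : ℂ} (ht : t ≠ 0) (x y : Fin 3 → ℂ) :
    gtInv t (mu1 (gt' t x) (gt' t y)) = ![0, x 0 * y 0, t ^ 3 * (x 1 * y 0)] := by
  funext i
  fin_cases i <;> simp [gtInv, mu1, gt'] <;> field_simp

theorem mu4_eq_vecCons (x y : Fin 3 → ℂ) : mu4 x y = ![0, x 0 * y 0, 0] := by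
  funext i
  fin_cases i <;> simp [mu4]

theorem tendsto_vecCons_pow_three (a b : ℂ) :
    Tendsto (fun t : ℂ => ![0, a, t ^ 3 * b]) (nhds 0) (nhds ![0, a, 0]) := by
  have hcont : Continuous fun t : ℂ => ![0, a, t ^ 3 * b] := by
    refine continuous_pi fun i => ?_
    fin_cases i <;> simp <;> fun_prop
  simpa using hcont.tendsto 0

/-- The family `g_t` contracts `μ₁` to `μ₄`:
`lim_{t→0} g_t⁻¹(μ₁(g_t(x), g_t(y))) = μ₄(x,y)` for all `x, y`. -/
theorem stmt_12 :
    ∀ x y : Fin 3 → ℂ,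
      Tendsto (fun t : ℂ => gtInv t (mu1 (gt' t x) (gt' t y)))
        (nhdsWithin 0 {0}ᶜ) (nhds (mu4 x y)) := by
  intro x y
  have hconj : ∀ᶠ t in nhdsWithin 0 {0}ᶜ,
      ![0, x 0 * y 0, t ^ 3 * (x 1 * y 0)] = gtInv t (mu1 (gt' t x) (gt' t y)) :=
    eventually_nhdsWithin_of_forall fun t ht => (gtInv_mu1_gt' ht x y).symm
  rw [mu4_eq_vecCons]
  exact ((tendsto_vecCons_pow_three _ _).mono_left nhdsWithin_le_nhds).congr' hconj
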